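/- For n = 3, the Z/2-subspace V_3* of R = MvPolynomial ((Z/2)^3) (ZMod 2) has dimension 13 over Z/2. (By the paper's isomorphism M_3 ≅ V_3, this computes dim_{Z/2} M_3 = 13 for the group of equivariant unoriented cobordism classes of 3-dimensional 2-torus manifolds.) -/

import Mathlib

/-!
A monomial `X_a X_b X_c` with `{a, b, c}` a basis of `V` is determined by the unordered basis, and
`d` sends it to the sum `X_b X_c + X_a X_c + X_a X_b` of its three "faces". So `V_3*` is the space
of mod-2 cycles of the 2-dimensional complex on the 7 nonzero vectors whose 28 triangles are the
unordered bases (every pair of distinct nonzero vectors is an edge), i.e. the kernel of its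
`21 × 28` boundary matrix. That matrix has rank 15, which is certified by an explicit basis of
its kernel together with a splitting.
-/

open MvPolynomial

/-- The differential operator `d = Σ_{v∈V} ∂/∂X_v` on
`MvPolynomial ((Z/2)^n) (ZMod 2)`. -/
noncomputable def dOp (n : ℕ) :
    MvPolynomial (Fin n → ZMod 2) (ZMod 2) →ₗ[ZMod 2]
      MvPolynomial (Fin n → ZMod 2) (ZMod 2) :=
  ∑ v : Fin n → ZMod 2, (pderiv v).toLinearMap

/-- Membership in `V_n*`: `d p = 0` and every monomial of `p` has the form
`X_{v_1} ⋯ X_{v_n}` where `(v_1, …, v_n)` is a basis of `V = (Z/2)^n`. -/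
def MemVstar (n : ℕ) (p : MvPolynomial (Fin n → ZMod 2) (ZMod 2)) : Prop :=
  dOp n p = 0 ∧
    ∀ m ∈ p.support, ∃ b : Module.Basis (Fin n) (ZMod 2) (Fin n → ZMod 2),
      m = ∑ j : Fin n, Finsupp.single (b j) 1

/-- `V_n*` as a `Z/2`-subspace of `MvPolynomial ((Z/2)^n) (ZMod 2)`. -/
noncomputable def VstarSub (n : ℕ) :
    Submodule (ZMod 2) (MvPolynomial (Fin n → ZMod 2) (ZMod 2)) where
  carrier := {p | MemVstar n p}
  zero_mem' := ⟨map_zero _, by simp⟩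
  add_mem' := by
    rintro a b ⟨ha1, ha2⟩ ⟨hb1, hb2⟩
    refine ⟨by rw [map_add, ha1, hb1, add_zero], fun m hm => ?_⟩
    rcases Finset.mem_union.mp (MvPolynomial.support_add hm) with h | h
    · exact ha2 m h
    · exact hb2 m h
  smul_mem' := by
    rintro c x ⟨hx1, hx2⟩
    refine ⟨by rw [map_smul, hx1, smul_zero], fun m hm => ?_⟩
    exact hx2 m (MvPolynomial.support_smul hm)

theorem Finsupp.sum_single_one_eq_iff {ι σ : Type*} [Fintype ι] [DecidableEq σ] {f g : ι → σ} :
    ∑ i, Finsupp.single (f i) 1 = ∑ i, Finsupp.single (g i) (1 : ℕ) ↔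
      ∀ a, (∑ i, if f i = a then 1 else 0 : ℕ) = ∑ i, if g i = a then 1 else 0 := by
  simp [Finsupp.ext_iff, Finsupp.finsetSum_apply, Finsupp.single_apply]

namespace Matrix

variable {R : Type*} [CommRing R] {l m n : Type*} [Fintype l] [Fintype m] [Fintype n]

theorem ker_mulVecLin_eq_range_of_mul_add_mul_eq_one [DecidableEq m] {A : Matrix l m R}
    {G : Matrix m n R} {P : Matrix n m R} {L : Matrix m l R} (hAG : A * G = 0)
    (hLA : L * A + G * P = 1) :
    LinearMap.ker A.mulVecLin = LinearMap.range G.mulVecLin := by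
  ext c
  simp only [LinearMap.mem_ker, LinearMap.mem_range, mulVecLin_apply]
  constructor
  · intro hc
    refine ⟨P *ᵥ c, ?_⟩
    simpa [add_mulVec, ← mulVec_mulVec, hc] using congrArg (· *ᵥ c) hLA
  · rintro ⟨x, rfl⟩
    simp [mulVec_mulVec, hAG]

theorem mulVecLin_injective_of_mul_eq_one [DecidableEq n] {G : Matrix m n R} {P : Matrix n m R}
    (hPG : P * G = 1) : Function.Injective G.mulVecLin :=
  Function.LeftInverse.injective (g := P.mulVecLin) fun x => by simp [mulVec_mulVec, hPG]

end Matrix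

namespace MvPolynomial

variable {R σ ι : Type*} [CommSemiring R]

theorem sum_pderiv_X_mul_X_mul_X [Fintype σ] [DecidableEq σ] (x y z : σ) :
    ∑ v, pderiv v (X x * X y * X z : MvPolynomial σ R) = X y * X z + X x * X z + X x * X y := by
  simp only [Derivation.leibniz, pderiv_X, smul_eq_mul, Pi.single_apply, mul_ite, mul_one,
    mul_zero, mul_add, Finset.sum_add_distrib, Finset.sum_ite_eq, Finset.mem_univ, if_true]
  ring

theorem monomial_sum_single_one [Fintype ι] (f : ι → σ) :
    monomial (∑ i, Finsupp.single (f i) 1) (1 : R) = ∏ i, X (f i) :=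
  monomial_sum_one _ _

theorem linearIndependent_monomial_one [Nontrivial R] {e : ι → σ →₀ ℕ} (he : Function.Injective e) :
    LinearIndependent R fun i => monomial (e i) (1 : R) := by
  have := (basisMonomials σ R).linearIndependent.comp e he
  rwa [coe_basisMonomials] at this

end MvPolynomial

theorem dOp_apply {n : ℕ} (p : MvPolynomial (Fin n → ZMod 2) (ZMod 2)) :
    dOp n p = ∑ v, pderiv v p := by
  simp [dOp]

theorem dOp_X_mul_X_mul_X {n : ℕ} (x y z : Fin n → ZMod 2) :
    dOp n (X x * X y * X z) = X y * X z + X x * X z + X x * X y := by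
  rw [dOp_apply, sum_pderiv_X_mul_X_mul_X]

namespace VstarThree

open Module LinearMap Matrix

local notation "V" => Fin 3 → ZMod 2

/- `nonzeroVec i` is the binary expansion of `i + 1`. The unordered bases of `V` are the
triples `i < j < l` of nonzero vectors not lying on a line (`vᵢ + vⱼ + vₗ ≠ 0`): these are the 28
rows of `basisTriple`. `edge` lists the 21 pairs `i < j`, and `face k j` is the edge of
`basisTriple k` opposite its `j`-th vertex. -/
def nonzeroVec : Fin 7 → V :=
  ![![0, 0, 1], ![0, 1, 0], ![0, 1, 1], ![1, 0, 0], ![1, 0, 1], ![1, 1, 0], ![1, 1, 1]]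

def basisTriple : Fin 28 → Fin 3 → Fin 7 :=
  ![![0, 1, 3], ![0, 1, 4], ![0, 1, 5], ![0, 1, 6], ![0, 2, 3], ![0, 2, 4], ![0, 2, 5],
    ![0, 2, 6], ![0, 3, 5], ![0, 3, 6], ![0, 4, 5], ![0, 4, 6], ![1, 2, 3], ![1, 2, 4],
    ![1, 2, 5], ![1, 2, 6], ![1, 3, 4], ![1, 3, 6], ![1, 4, 5], ![1, 5, 6], ![2, 3, 4],
    ![2, 3, 5], ![2, 4, 6], ![2, 5, 6], ![3, 4, 5], ![3, 4, 6], ![3, 5, 6], ![4, 5, 6]]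

def edge : Fin 21 → Fin 2 → Fin 7 :=
  ![![0, 1], ![0, 2], ![0, 3], ![0, 4], ![0, 5], ![0, 6], ![1, 2], ![1, 3], ![1, 4], ![1, 5],
    ![1, 6], ![2, 3], ![2, 4], ![2, 5], ![2, 6], ![3, 4], ![3, 5], ![3, 6], ![4, 5], ![4, 6],
    ![5, 6]]

def face : Fin 28 → Fin 3 → Fin 21 :=
  ![![7, 2, 0], ![8, 3, 0], ![9, 4, 0], ![10, 5, 0], ![11, 2, 1], ![12, 3, 1], ![13, 4, 1],
    ![14, 5, 1], ![16, 4, 2], ![17, 5, 2], ![18, 4, 3], ![19, 5, 3], ![11, 7, 6], ![12, 8, 6],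
    ![13, 9, 6], ![14, 10, 6], ![15, 8, 7], ![17, 10, 7], ![18, 9, 8], ![20, 10, 9],
    ![15, 12, 11], ![16, 13, 11], ![19, 14, 12], ![20, 14, 13], ![18, 16, 15], ![19, 17, 15],
    ![20, 17, 16], ![20, 19, 18]]

def boundary : Matrix (Fin 21) (Fin 28) (ZMod 2) :=
  Matrix.of fun r k => ∑ j, if face k j = r then 1 else 0

/- Certificate for `dim ker boundary = 13`: the columns of `cycleBasis` are cycles, independent
since `pivotProjection * cycleBasis = 1`, and span all cycles because
`boundaryHomotopy * boundary + cycleBasis * pivotProjection = 1`. -/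
def cycleBasis : Matrix (Fin 28) (Fin 13) (ZMod 2) :=
  ![![1,1,1,1,0,1,0,0,0,1,1,0,0],
    ![1,0,0,0,1,1,0,0,0,1,1,0,0],
    ![0,1,0,0,1,0,0,0,1,0,0,1,1],
    ![0,0,1,1,0,0,0,0,1,0,0,1,1],
    ![1,1,1,0,0,1,1,0,0,0,0,0,0],
    ![1,0,0,0,0,1,0,1,0,0,0,0,0],
    ![0,1,0,0,0,0,1,0,1,0,0,0,0],
    ![0,0,1,0,0,0,0,1,1,0,0,0,0],
    ![0,0,0,0,0,0,1,0,0,1,0,1,0],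
    ![0,0,0,1,0,0,0,0,0,0,1,1,0],
    ![0,0,0,0,1,0,0,0,0,1,0,0,1],
    ![0,0,0,0,0,0,0,1,0,0,1,0,1],
    ![1,1,1,0,0,0,0,0,0,0,0,0,0],
    ![1,0,0,0,0,0,0,0,0,0,0,0,0],
    ![0,1,0,0,0,0,0,0,0,0,0,0,0],
    ![0,0,1,0,0,0,0,0,0,0,0,0,0],
    ![0,0,0,0,0,1,0,0,0,1,1,0,0],
    ![0,0,0,1,0,0,0,0,0,0,0,0,0],
    ![0,0,0,0,1,0,0,0,0,0,0,0,0],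
    ![0,0,0,0,0,0,0,0,1,0,0,1,1],
    ![0,0,0,0,0,1,0,0,0,0,0,0,0],
    ![0,0,0,0,0,0,1,0,0,0,0,0,0],
    ![0,0,0,0,0,0,0,1,0,0,0,0,0],
    ![0,0,0,0,0,0,0,0,1,0,0,0,0],
    ![0,0,0,0,0,0,0,0,0,1,0,0,0],
    ![0,0,0,0,0,0,0,0,0,0,1,0,0],
    ![0,0,0,0,0,0,0,0,0,0,0,1,0],
    ![0,0,0,0,0,0,0,0,0,0,0,0,1]]

def pivot : Fin 13 → Fin 28 := ![13, 14, 15, 17, 18, 20, 21, 22, 23, 24, 25, 26, 27]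

def pivotProjection : Matrix (Fin 13) (Fin 28) (ZMod 2) :=
  Matrix.of fun i k => if k = pivot i then 1 else 0

def boundaryHomotopy : Matrix (Fin 28) (Fin 21) (ZMod 2) :=
  ![![0,0,0,0,0,0,1,1,0,0,0,0,0,0,0,1,0,0,0,0,0],
    ![0,0,0,0,0,0,0,0,1,0,0,0,0,0,0,1,0,0,0,0,0],
    ![0,0,0,0,1,0,0,0,0,0,0,0,0,1,0,0,1,0,1,0,0],
    ![1,0,0,0,1,0,1,1,1,0,0,0,0,1,0,0,1,0,1,0,0],
    ![0,0,0,0,0,0,1,0,0,0,0,1,0,0,0,0,0,0,0,0,0],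
    ![0,0,0,0,0,0,0,0,0,0,0,0,1,0,0,0,0,0,0,0,0],
    ![0,0,0,0,0,0,0,0,0,0,0,0,0,1,0,0,0,0,0,0,0],
    ![0,1,0,0,0,0,1,0,0,0,0,1,1,1,0,0,0,0,0,0,0],
    ![0,0,0,0,0,0,0,0,0,0,0,0,0,0,0,0,1,0,0,0,0],
    ![0,0,1,0,0,0,0,1,0,0,0,1,0,0,0,1,1,0,0,0,0],
    ![0,0,0,0,0,0,0,0,0,0,0,0,0,0,0,0,0,0,1,0,0],
    ![0,0,0,1,0,0,0,0,1,0,0,0,1,0,0,1,0,0,1,0,0],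
    ![0,0,0,0,0,0,1,0,0,0,0,0,0,0,0,0,0,0,0,0,0],
    ![0,0,0,0,0,0,0,0,0,0,0,0,0,0,0,0,0,0,0,0,0],
    ![0,0,0,0,0,0,0,0,0,0,0,0,0,0,0,0,0,0,0,0,0],
    ![0,0,0,0,0,0,0,0,0,0,0,0,0,0,0,0,0,0,0,0,0],
    ![0,0,0,0,0,0,0,0,0,0,0,0,0,0,0,1,0,0,0,0,0],
    ![0,0,0,0,0,0,0,0,0,0,0,0,0,0,0,0,0,0,0,0,0],
    ![0,0,0,0,0,0,0,0,0,0,0,0,0,0,0,0,0,0,0,0,0],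
    ![0,0,0,0,1,0,0,0,0,1,0,0,0,1,0,0,1,0,1,0,0],
    ![0,0,0,0,0,0,0,0,0,0,0,0,0,0,0,0,0,0,0,0,0],
    ![0,0,0,0,0,0,0,0,0,0,0,0,0,0,0,0,0,0,0,0,0],
    ![0,0,0,0,0,0,0,0,0,0,0,0,0,0,0,0,0,0,0,0,0],
    ![0,0,0,0,0,0,0,0,0,0,0,0,0,0,0,0,0,0,0,0,0],
    ![0,0,0,0,0,0,0,0,0,0,0,0,0,0,0,0,0,0,0,0,0],
    ![0,0,0,0,0,0,0,0,0,0,0,0,0,0,0,0,0,0,0,0,0],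
    ![0,0,0,0,0,0,0,0,0,0,0,0,0,0,0,0,0,0,0,0,0],
    ![0,0,0,0,0,0,0,0,0,0,0,0,0,0,0,0,0,0,0,0,0]]

theorem edge_face (k : Fin 28) :
    edge (face k 0) = ![basisTriple k 1, basisTriple k 2] ∧
    edge (face k 1) = ![basisTriple k 0, basisTriple k 2] ∧
    edge (face k 2) = ![basisTriple k 0, basisTriple k 1] := by
  revert k
  decide +kernel

noncomputable def triangleExponent (k : Fin 28) : V →₀ ℕ :=
  ∑ i, Finsupp.single (nonzeroVec (basisTriple k i)) 1

noncomputable def edgeExponent (r : Fin 21) : V →₀ ℕ :=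
  ∑ i, Finsupp.single (nonzeroVec (edge r i)) 1

theorem triangleExponent_injective : Function.Injective triangleExponent := by
  intro k k'
  rw [triangleExponent, triangleExponent, Finsupp.sum_single_one_eq_iff]
  revert k k'
  decide +kernel

theorem edgeExponent_injective : Function.Injective edgeExponent := by
  intro r r'
  rw [edgeExponent, edgeExponent, Finsupp.sum_single_one_eq_iff]
  revert r r'
  decide +kernel

theorem linearIndependent_basisTriple (k : Fin 28) :
    LinearIndependent (ZMod 2) (nonzeroVec ∘ basisTriple k) := by
  rw [Fintype.linearIndependent_iff]
  revert k
  decide +kernel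

theorem exists_triangleExponent_eq {f : Fin 3 → V} (hf : LinearIndependent (ZMod 2) f) :
    ∃ k, ∑ i, Finsupp.single (f i) 1 = triangleExponent k := by
  rw [Fintype.linearIndependent_iff] at hf
  simp only [triangleExponent, Finsupp.sum_single_one_eq_iff]
  revert f
  decide +kernel

theorem mem_range_triangleExponent_iff {m : V →₀ ℕ} : m ∈ Set.range triangleExponent ↔
    ∃ b : Basis (Fin 3) (ZMod 2) V, m = ∑ j, Finsupp.single (b j) 1 := by
  constructor
  · rintro ⟨k, rfl⟩
    have hcard : Fintype.card (Fin 3) = finrank (ZMod 2) V := by simp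
    refine ⟨basisOfLinearIndependentOfCardEqFinrank (linearIndependent_basisTriple k) hcard, ?_⟩
    simp [triangleExponent]
  · rintro ⟨b, rfl⟩
    obtain ⟨k, hk⟩ := exists_triangleExponent_eq b.linearIndependent
    exact ⟨k, hk.symm⟩

noncomputable def ofTriangleCoeffs : (Fin 28 → ZMod 2) →ₗ[ZMod 2] MvPolynomial V (ZMod 2) :=
  Fintype.linearCombination (ZMod 2) fun k => monomial (triangleExponent k) 1

noncomputable def ofEdgeCoeffs : (Fin 21 → ZMod 2) →ₗ[ZMod 2] MvPolynomial V (ZMod 2) :=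
  Fintype.linearCombination (ZMod 2) fun r => monomial (edgeExponent r) 1

theorem ofTriangleCoeffs_injective : Function.Injective ofTriangleCoeffs :=
  linearIndependent_iff_injective_fintypeLinearCombination.mp
    (linearIndependent_monomial_one triangleExponent_injective)

theorem ofEdgeCoeffs_injective : Function.Injective ofEdgeCoeffs :=
  linearIndependent_iff_injective_fintypeLinearCombination.mp
    (linearIndependent_monomial_one edgeExponent_injective)

theorem range_ofTriangleCoeffs :
    range ofTriangleCoeffs = restrictSupport (ZMod 2) (Set.range triangleExponent) := by
  rw [ofTriangleCoeffs, Fintype.range_linearCombination, restrictSupport_eq_span,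
    ← Set.range_comp]
  rfl

theorem dOp_monomial_triangleExponent (k : Fin 28) :
    dOp 3 (monomial (triangleExponent k) 1) = ∑ j, monomial (edgeExponent (face k j)) 1 := by
  obtain ⟨h0, h1, h2⟩ := edge_face k
  rw [triangleExponent, monomial_sum_single_one, Fin.prod_univ_three, dOp_X_mul_X_mul_X]
  simp only [edgeExponent, monomial_sum_single_one, Fin.prod_univ_two, Fin.sum_univ_three, h0, h1,
    h2]
  simp

theorem dOp_ofTriangleCoeffs (c : Fin 28 → ZMod 2) :
    dOp 3 (ofTriangleCoeffs c) = ofEdgeCoeffs (boundary *ᵥ c) := by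
  simp only [ofTriangleCoeffs, ofEdgeCoeffs, Fintype.linearCombination_apply, map_sum, map_smul,
    dOp_monomial_triangleExponent, mulVec, dotProduct, boundary, of_apply, Finset.sum_mul,
    Finset.sum_smul, Finset.smul_sum, ite_mul, one_mul, zero_mul, ite_smul, zero_smul]
  conv_rhs => rw [Finset.sum_comm]; enter [2, k]; rw [Finset.sum_comm]
  simp only [Finset.sum_ite_eq, Finset.mem_univ, if_true]

theorem vstarSub_three_eq_map :
    VstarSub 3 = (ker boundary.mulVecLin).map ofTriangleCoeffs := by
  ext p
  simp only [Submodule.mem_map, mem_ker, Matrix.mulVecLin_apply]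
  constructor
  · rintro ⟨hd, hsupp⟩
    have hp : p ∈ range ofTriangleCoeffs := by
      rw [range_ofTriangleCoeffs, mem_restrictSupport_iff]
      exact fun m hm => mem_range_triangleExponent_iff.mpr (hsupp m hm)
    obtain ⟨c, rfl⟩ := hp
    refine ⟨c, ofEdgeCoeffs_injective ?_, rfl⟩
    rw [← dOp_ofTriangleCoeffs, hd, map_zero]
  · rintro ⟨c, hc, rfl⟩
    refine ⟨by rw [dOp_ofTriangleCoeffs, hc, map_zero], fun m hm => ?_⟩
    have hp : ofTriangleCoeffs c ∈ restrictSupport (ZMod 2) (Set.range triangleExponent) :=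
      range_ofTriangleCoeffs ▸ mem_range_self _ c
    exact mem_range_triangleExponent_iff.mp (hp hm)

theorem boundary_mul_cycleBasis : boundary * cycleBasis = 0 := by decide +kernel

theorem pivotProjection_mul_cycleBasis : pivotProjection * cycleBasis = 1 := by decide +kernel

theorem boundaryHomotopy_mul_boundary_add :
    boundaryHomotopy * boundary + cycleBasis * pivotProjection = 1 := by
  decide +kernel

theorem finrank_ker_boundary : finrank (ZMod 2) (ker boundary.mulVecLin) = 13 := by
  rw [Matrix.ker_mulVecLin_eq_range_of_mul_add_mul_eq_one boundary_mul_cycleBasis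
      boundaryHomotopy_mul_boundary_add,
    finrank_range_of_inj
      (Matrix.mulVecLin_injective_of_mul_eq_one pivotProjection_mul_cycleBasis),
    finrank_fin_fun]

end VstarThree

/-- `dim_{Z/2} V_3* = 13`; by the isomorphism `M_3 ≅ V_3` of the paper this computes
`dim_{Z/2} M_3 = 13`. -/
theorem finrank_Vstar_three : Module.finrank (ZMod 2) (VstarSub 3) = 13 := by
  rw [VstarThree.vstarSub_three_eq_map,
    ← (Submodule.equivMapOfInjective _ VstarThree.ofTriangleCoeffs_injective _).finrank_eq,
    VstarThree.finrank_ker_boundary]
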